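/- Let α ∈ (0,1), m ∈ ℕ, and a : ℕ → [0,∞] (extended nonnegative reals). Define f : (0,1) → [0,∞] by f(λ) = ∑_{n=0}^∞ n!·λ^(2n)·a(n), a tsum in [0,∞]. For k ∈ ℕ let J^k denote the k-fold iterated integration operator, J^0 g = g and (J^(k+1) g)(x) = ∫₀^x (J^k g)(t) dt (Lebesgue lower integral). Then (1/Γ(α))·∫₀¹ (1−λ)^(α−1)·(J^m f)(λ) dλ < ∞ if and only if ∑_{n=0}^∞ (n!/(1+n^(m+α)))·a(n) < ∞. (Sequence form of Theorem 2.11: Φ ∈ D^{−m−α,2}.) -/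

import Mathlib

open MeasureTheory ENNReal Real

/-- The `k`-fold iterated integration operator: `J^0 g = g` and
`(J^(k+1) g)(x) = ∫₀ˣ (J^k g)(t) dt` (lower Lebesgue integral). -/
noncomputable def iterIntegral : ℕ → (ℝ → ℝ≥0∞) → (ℝ → ℝ≥0∞)
  | 0, g => g
  | k + 1, g => fun x => ∫⁻ t in Set.Ioo (0 : ℝ) x, iterIntegral k g t

/-!
Integrating the power series term by term, `J^m` sends `λ^(2n)` to
`λ^(2n+m) / ((2n+1)⋯(2n+m))`, so the left-hand side is
`Γ(α)⁻¹ ∑ₙ n! a(n) M(2n+m) / ((2n+1)⋯(2n+m))` with the kernel moments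
`M(p) = ∫₀¹ (1-λ)^(α-1) λ^p dλ`. These moments are comparable to `(p+1)^(-α)`: from above by a
Gamma integral (`λ^p ≤ e·e^{-(p+1)(1-λ)}`), from below by integrating over the last interval of
length `1/(2(p+1))`, where `λ^p ≥ 1/2` by Bernoulli. Since `(2n+1)⋯(2n+m)` is comparable to
`(n+1)^m`, the weights are comparable to `n!/(1+n^(m+α))` uniformly in `n`, and sums of `a`
against comparable weights are finite together.
-/

open Set

theorem measurable_iterIntegral {g : ℝ → ℝ≥0∞} (hg : Measurable g) :
    ∀ k, Measurable (iterIntegral k g)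
  | 0 => hg
  | _ + 1 => Monotone.measurable fun _ _ hxy => lintegral_mono_set (Ioo_subset_Ioo_right hxy)

theorem iterIntegral_tsum {g : ℕ → ℝ → ℝ≥0∞} (hg : ∀ n, Measurable (g n)) :
    ∀ k x, iterIntegral k (fun y => ∑' n, g n y) x = ∑' n, iterIntegral k (g n) x
  | 0, _ => rfl
  | k + 1, x => by
    simp only [iterIntegral, iterIntegral_tsum hg k]
    exact lintegral_tsum fun n => (measurable_iterIntegral (hg n) k).aemeasurable

theorem iterIntegral_const_mul (c : ℝ≥0∞) {g : ℝ → ℝ≥0∞} (hg : Measurable g) :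
    ∀ k x, iterIntegral k (fun y => c * g y) x = c * iterIntegral k g x
  | 0, _ => rfl
  | k + 1, x => by
    simp only [iterIntegral, iterIntegral_const_mul c hg k]
    exact lintegral_const_mul c (measurable_iterIntegral hg k)

theorem setLIntegral_Ioo_ofReal_pow {x : ℝ} (hx : 0 ≤ x) (p : ℕ) :
    ∫⁻ t in Ioo 0 x, ENNReal.ofReal t ^ p = ENNReal.ofReal x ^ (p + 1) / (p + 1 : ℕ) := by
  have hint : IntegrableOn (fun t : ℝ => t ^ p) (Ioo 0 x) :=
    (continuous_pow p).integrableOn_Icc.mono_set Ioo_subset_Icc_self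
  rw [setLIntegral_congr_fun measurableSet_Ioo fun t ht => (ENNReal.ofReal_pow ht.1.le p).symm,
    ← ofReal_integral_eq_lintegral_ofReal hint
      ((ae_restrict_mem measurableSet_Ioo).mono fun t ht => pow_nonneg ht.1.le p),
    ← integral_Ioc_eq_integral_Ioo, ← intervalIntegral.integral_of_le hx, integral_pow,
    ENNReal.ofReal_div_of_pos (by positivity), zero_pow p.succ_ne_zero, sub_zero,
    ENNReal.ofReal_pow hx, ← Nat.cast_succ, ENNReal.ofReal_natCast]

theorem iterIntegral_ofReal_pow (j : ℕ) :
    ∀ k {x : ℝ}, 0 ≤ x → iterIntegral k (fun y => ENNReal.ofReal y ^ j) x =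
      ENNReal.ofReal x ^ (j + k) / (j + 1).ascFactorial k
  | 0, x, _ => by simp [iterIntegral]
  | k + 1, x, hx => by
    simp only [iterIntegral]
    rw [setLIntegral_congr_fun measurableSet_Ioo fun t ht => iterIntegral_ofReal_pow j k ht.1.le]
    simp only [div_eq_mul_inv]
    rw [lintegral_mul_const _ (by fun_prop), ← div_eq_mul_inv, setLIntegral_Ioo_ofReal_pow hx,
      Nat.ascFactorial_succ, Nat.cast_mul, ENNReal.mul_inv (by simp) (by simp)]
    simp only [div_eq_mul_inv]
    rw [add_right_comm j 1 k, ← mul_assoc]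
    rfl

theorem setLIntegral_mul_iterIntegral_tsum {w : ℝ → ℝ≥0∞} (hw : Measurable w)
    (c : ℕ → ℝ≥0∞) (e : ℕ → ℕ) (k : ℕ) :
    ∫⁻ x in Ioo 0 1, w x * iterIntegral k (fun y => ∑' n, c n * ENNReal.ofReal y ^ e n) x =
      ∑' n, (∫⁻ x in Ioo 0 1, w x * ENNReal.ofReal x ^ (e n + k)) /
        (e n + 1).ascFactorial k * c n := by
  have hpow : ∀ p, Measurable fun y : ℝ => ENNReal.ofReal y ^ p := fun p => by fun_prop
  have hJ : ∀ x ∈ Ioo (0 : ℝ) 1,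
      w x * iterIntegral k (fun y => ∑' n, c n * ENNReal.ofReal y ^ e n) x =
        ∑' n, w x * ENNReal.ofReal x ^ (e n + k) * ((e n + 1).ascFactorial k : ℝ≥0∞)⁻¹ * c n := by
    intro x hx
    rw [iterIntegral_tsum (fun n => (hpow _).const_mul _), ← ENNReal.tsum_mul_left]
    refine tsum_congr fun n => ?_
    rw [iterIntegral_const_mul _ (hpow _), iterIntegral_ofReal_pow _ _ hx.1.le, div_eq_mul_inv]
    ring
  rw [setLIntegral_congr_fun measurableSet_Ioo hJ, lintegral_tsum fun n => by fun_prop]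
  refine tsum_congr fun n => ?_
  rw [lintegral_mul_const _ (by fun_prop), lintegral_mul_const _ (by fun_prop), div_eq_mul_inv]

theorem pow_le_exp_one_mul_exp_neg {x : ℝ} (hx : 0 ≤ x) (p : ℕ) :
    x ^ p ≤ exp 1 * exp (-((p + 1) * (1 - x))) :=
  calc x ^ p ≤ exp (x - 1) ^ p := by
        gcongr
        linarith [add_one_le_exp (x - 1)]
    _ = exp (1 - x) * exp (-((p + 1) * (1 - x))) := by
        rw [← exp_nat_mul, ← exp_add]
        congr 1
        ring
    _ ≤ exp 1 * exp (-((p + 1) * (1 - x))) := by gcongr; linarith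

theorem setLIntegral_one_sub_rpow_mul_pow_le {α : ℝ} (hα : 0 < α) (p : ℕ) :
    ∫⁻ x in Ioo 0 1, ENNReal.ofReal ((1 - x) ^ (α - 1)) * ENNReal.ofReal x ^ p ≤
      ENNReal.ofReal (exp 1 * Gamma α / ((p : ℝ) + 1) ^ α) := by
  have hq : (0 : ℝ) < p + 1 := by positivity
  set F : ℝ → ℝ≥0∞ := fun y => ENNReal.ofReal (exp 1 * (y ^ (α - 1) * exp (-((p + 1) * y))))
  have hF : ∀ x ∈ Ioo (0 : ℝ) 1,
      ENNReal.ofReal ((1 - x) ^ (α - 1)) * ENNReal.ofReal x ^ p ≤ F (1 - x) := by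
    intro x hx
    have hk : 0 ≤ (1 - x) ^ (α - 1) := rpow_nonneg (by linarith [hx.2]) _
    rw [← ENNReal.ofReal_pow hx.1.le, ← ENNReal.ofReal_mul hk]
    refine ENNReal.ofReal_le_ofReal ?_
    calc (1 - x) ^ (α - 1) * x ^ p
        ≤ (1 - x) ^ (α - 1) * (exp 1 * exp (-((p + 1) * (1 - x)))) :=
          mul_le_mul_of_nonneg_left (pow_le_exp_one_mul_exp_neg hx.1.le p) hk
      _ = _ := by ring
  have hreflect : ∫⁻ x in Ioo 0 1, F (1 - x) = ∫⁻ y in Ioo 0 1, F y := by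
    rw [(Measure.measurePreserving_sub_left volume (1 : ℝ)).setLIntegral_comp_emb
      (MeasurableEquiv.subLeft (1 : ℝ)).measurableEmbedding F (Ioo 0 1), image_const_sub_Ioo]
    norm_num
  have hGamma : ∫⁻ y in Ioi 0, F y = ENNReal.ofReal (exp 1 * ((1 / (p + 1)) ^ α * Gamma α)) := by
    have hint : IntegrableOn (fun y : ℝ => y ^ (α - 1) * exp (-((p + 1) * y))) (Ioi 0) := by
      have h := integrableOn_rpow_mul_exp_neg_mul_rpow (s := α - 1) (by linarith) zero_lt_one hq
      simpa only [Real.rpow_one, neg_mul] using h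
    rw [← ofReal_integral_eq_lintegral_ofReal (hint.const_mul _)
      ((ae_restrict_mem measurableSet_Ioi).mono fun y (hy : 0 < y) => by positivity),
      integral_const_mul, integral_rpow_mul_exp_neg_mul_Ioi hα hq]
  calc ∫⁻ x in Ioo 0 1, ENNReal.ofReal ((1 - x) ^ (α - 1)) * ENNReal.ofReal x ^ p
      ≤ ∫⁻ x in Ioo 0 1, F (1 - x) := setLIntegral_mono (by fun_prop) hF
    _ = ∫⁻ y in Ioo 0 1, F y := hreflect
    _ ≤ ∫⁻ y in Ioi 0, F y := lintegral_mono_set Ioo_subset_Ioi_self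
    _ = ENNReal.ofReal (exp 1 * Gamma α / ((p : ℝ) + 1) ^ α) := by
      rw [hGamma, one_div, inv_rpow hq.le]
      congr 1
      ring

theorem le_setLIntegral_one_sub_rpow_mul_pow {α : ℝ} (hα : α ≤ 1) (p : ℕ) :
    ENNReal.ofReal (1 / (4 * ((p : ℝ) + 1) ^ α)) ≤
      ∫⁻ x in Ioo 0 1, ENNReal.ofReal ((1 - x) ^ (α - 1)) * ENNReal.ofReal x ^ p := by
  have hq : (0 : ℝ) < p + 1 := by positivity
  set δ : ℝ := (2 * (p + 1))⁻¹
  have hδ₀ : 0 < δ := by positivity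
  have hpδ : p * δ ≤ 1 / 2 := by
    rw [← div_eq_mul_inv, div_le_iff₀ (by positivity)]
    linarith
  have hδ₁ : δ ≤ 1 / 2 := by
    have : (1 : ℝ) ≤ p + 1 := by linarith [p.cast_nonneg (α := ℝ)]
    rw [inv_le_comm₀ (by positivity) (by norm_num)]
    linarith
  have hbernoulli : 1 / 2 ≤ (1 - δ) ^ p := by
    have := one_add_mul_le_pow (a := -δ) (by linarith) p
    rw [← sub_eq_add_neg] at this
    linarith
  have hpt : ∀ x ∈ Ioo (1 - δ) 1,
      ENNReal.ofReal (δ ^ (α - 1) / 2) ≤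
        ENNReal.ofReal ((1 - x) ^ (α - 1)) * ENNReal.ofReal x ^ p := by
    intro x ⟨hx₀, hx₁⟩
    rw [← ENNReal.ofReal_pow (by linarith), ← ENNReal.ofReal_mul (rpow_nonneg (by linarith) _)]
    refine ENNReal.ofReal_le_ofReal ?_
    rw [div_eq_mul_one_div]
    exact mul_le_mul (rpow_le_rpow_of_nonpos (by linarith) (by linarith) (by linarith))
      (hbernoulli.trans (pow_le_pow_left₀ (by linarith) hx₀.le p)) (by norm_num)
      (rpow_nonneg (by linarith) _)
  have hconst : 1 / (4 * ((p : ℝ) + 1) ^ α) ≤ δ ^ (α - 1) / 2 * δ := by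
    have h2 : (2 : ℝ) ^ α ≤ 2 := by
      simpa using Real.rpow_le_rpow_of_exponent_le one_le_two hα
    rw [div_mul_eq_mul_div, rpow_sub_one hδ₀.ne', div_mul_cancel₀ _ hδ₀.ne',
      Real.inv_rpow (by positivity), mul_rpow zero_le_two hq.le, ← one_div, div_div,
      one_div_le_one_div (by positivity) (by positivity)]
    nlinarith [rpow_pos_of_pos hq α]
  calc ENNReal.ofReal (1 / (4 * ((p : ℝ) + 1) ^ α))
      ≤ ENNReal.ofReal (δ ^ (α - 1) / 2 * δ) := ENNReal.ofReal_le_ofReal hconst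
    _ = ∫⁻ _ in Ioo (1 - δ) 1, ENNReal.ofReal (δ ^ (α - 1) / 2) := by
      rw [setLIntegral_const, volume_Ioo, _root_.sub_sub_cancel,
        ENNReal.ofReal_mul (div_nonneg (rpow_nonneg hδ₀.le _) zero_le_two)]
    _ ≤ ∫⁻ x in Ioo (1 - δ) 1, ENNReal.ofReal ((1 - x) ^ (α - 1)) * ENNReal.ofReal x ^ p :=
      setLIntegral_mono (by fun_prop) hpt
    _ ≤ _ := lintegral_mono_set (Ioo_subset_Ioo_left (by linarith))

theorem rpow_add_le_ascFactorial_mul_rpow {α : ℝ} (hα : 0 ≤ α) (p m : ℕ) :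
    ((p : ℝ) + 1) ^ ((m : ℝ) + α) ≤ (p + 1).ascFactorial m * ((p : ℝ) + m + 1) ^ α := by
  rw [Real.rpow_add (by positivity), Real.rpow_natCast]
  gcongr
  · exact_mod_cast Nat.pow_succ_le_ascFactorial (p + 1) m
  · linarith [m.cast_nonneg (α := ℝ)]

theorem ascFactorial_mul_rpow_le {α : ℝ} (hα : 0 ≤ α) (p m : ℕ) :
    (p + 1).ascFactorial m * ((p : ℝ) + m + 1) ^ α ≤
      (((m : ℝ) + 1) * (p + 1)) ^ ((m : ℝ) + α) := by
  have hp : (0 : ℝ) ≤ p := p.cast_nonneg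
  have hm : (0 : ℝ) ≤ m := m.cast_nonneg
  rw [Real.rpow_add (by positivity), Real.rpow_natCast]
  gcongr
  · calc ((p + 1).ascFactorial m : ℝ) ≤ ((p + m : ℕ) : ℝ) ^ m := by
          exact_mod_cast Nat.ascFactorial_le_pow_add p m
      _ ≤ _ := by push_cast; gcongr; nlinarith
  · nlinarith

theorem one_add_rpow_le_two_mul_rpow {x s : ℝ} (hx : 0 ≤ x) (hs : 0 ≤ s) :
    1 + x ^ s ≤ 2 * (2 * x + 1) ^ s := by
  have h1 : 1 ≤ (2 * x + 1) ^ s := one_le_rpow (by linarith) hs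
  have h2 : x ^ s ≤ (2 * x + 1) ^ s := rpow_le_rpow hx (by linarith) hs
  linarith

theorem two_mul_add_one_rpow_le {x s : ℝ} (hx : 0 ≤ x) (hs : 0 ≤ s) :
    (2 * x + 1) ^ s ≤ 3 ^ s * (1 + x ^ s) := by
  have h3 : (0 : ℝ) ≤ 3 ^ s := by positivity
  rcases le_total x 1 with hx1 | hx1
  · have : (2 * x + 1) ^ s ≤ 3 ^ s := rpow_le_rpow (by linarith) (by linarith) hs
    nlinarith [rpow_nonneg hx s]
  · have : (2 * x + 1) ^ s ≤ (3 * x) ^ s := rpow_le_rpow (by linarith) (by linarith) hs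
    rw [mul_rpow (by norm_num) hx] at this
    linarith

theorem ENNReal.ofReal_div_natCast {x : ℝ} {k : ℕ} (hk : 0 < k) :
    ENNReal.ofReal x / k = ENNReal.ofReal (x / k) := by
  rw [ENNReal.ofReal_div_of_pos (by exact_mod_cast hk), ENNReal.ofReal_natCast]

theorem ENNReal.inv_one_add_ofReal {t : ℝ} (ht : 0 ≤ t) :
    (1 + ENNReal.ofReal t)⁻¹ = ENNReal.ofReal (1 + t)⁻¹ := by
  rw [ENNReal.ofReal_inv_of_pos (by positivity), ENNReal.ofReal_add zero_le_one ht,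
    ENNReal.ofReal_one]

section Weights

variable {α : ℝ} (m n : ℕ)

theorem one_add_rpow_le_two_mul_ascFactorial_mul_rpow (hα : 0 ≤ α) :
    1 + (n : ℝ) ^ ((m : ℝ) + α) ≤
      2 * ((2 * n + 1).ascFactorial m * (((2 * n + m : ℕ) : ℝ) + 1) ^ α) := by
  have h := rpow_add_le_ascFactorial_mul_rpow hα (2 * n) m
  push_cast at h ⊢
  linarith [one_add_rpow_le_two_mul_rpow n.cast_nonneg (by positivity : (0 : ℝ) ≤ m + α)]

theorem ascFactorial_mul_rpow_le_mul_one_add_rpow (hα : 0 ≤ α) :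
    (2 * n + 1).ascFactorial m * (((2 * n + m : ℕ) : ℝ) + 1) ^ α ≤
      (3 * ((m : ℝ) + 1)) ^ ((m : ℝ) + α) * (1 + (n : ℝ) ^ ((m : ℝ) + α)) := by
  have hs : (0 : ℝ) ≤ m + α := by positivity
  have h := ascFactorial_mul_rpow_le hα (2 * n) m
  push_cast at h ⊢
  rw [Real.mul_rpow (by positivity) (by positivity)] at h
  rw [Real.mul_rpow (by norm_num) (by positivity), mul_comm (3 ^ _) _, mul_assoc]
  exact h.trans (mul_le_mul_of_nonneg_left (two_mul_add_one_rpow_le n.cast_nonneg hs)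
    (by positivity))

theorem setLIntegral_div_ascFactorial_le (hα : 0 < α) :
    (∫⁻ x in Ioo 0 1, ENNReal.ofReal ((1 - x) ^ (α - 1)) * ENNReal.ofReal x ^ (2 * n + m)) /
        (2 * n + 1).ascFactorial m ≤
      ENNReal.ofReal (2 * (exp 1 * Gamma α)) *
        (1 + ENNReal.ofReal ((n : ℝ) ^ ((m : ℝ) + α)))⁻¹ := by
  set W : ℝ := (2 * n + 1).ascFactorial m * (((2 * n + m : ℕ) : ℝ) + 1) ^ α
  have hW := one_add_rpow_le_two_mul_ascFactorial_mul_rpow m n hα.le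
  have hK : 0 < exp 1 * Gamma α := mul_pos (exp_pos 1) (Gamma_pos_of_pos hα)
  have hN : 0 ≤ (n : ℝ) ^ ((m : ℝ) + α) := by positivity
  calc _ ≤ ENNReal.ofReal (exp 1 * Gamma α / (((2 * n + m : ℕ) : ℝ) + 1) ^ α) /
          (2 * n + 1).ascFactorial m :=
        ENNReal.div_le_div_right (setLIntegral_one_sub_rpow_mul_pow_le hα _) _
    _ = ENNReal.ofReal (exp 1 * Gamma α / W) := by
        rw [ENNReal.ofReal_div_natCast (Nat.ascFactorial_pos _ _), div_div, mul_comm (_ ^ α)]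
    _ ≤ ENNReal.ofReal (2 * (exp 1 * Gamma α) * (1 + (n : ℝ) ^ ((m : ℝ) + α))⁻¹) := by
        refine ENNReal.ofReal_le_ofReal ?_
        rw [← div_eq_mul_inv, div_le_div_iff₀ (by positivity) (by positivity)]
        nlinarith
    _ = _ := by rw [ENNReal.ofReal_mul (by positivity), ENNReal.inv_one_add_ofReal hN]

theorem inv_one_add_rpow_le_setLIntegral_div_ascFactorial (hα₀ : 0 ≤ α) (hα₁ : α ≤ 1) :
    (1 + ENNReal.ofReal ((n : ℝ) ^ ((m : ℝ) + α)))⁻¹ ≤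
      ENNReal.ofReal (4 * (3 * ((m : ℝ) + 1)) ^ ((m : ℝ) + α)) *
        ((∫⁻ x in Ioo 0 1, ENNReal.ofReal ((1 - x) ^ (α - 1)) * ENNReal.ofReal x ^ (2 * n + m)) /
          (2 * n + 1).ascFactorial m) := by
  have hW := ascFactorial_mul_rpow_le_mul_one_add_rpow m n hα₀
  have hN : 0 ≤ (n : ℝ) ^ ((m : ℝ) + α) := by positivity
  calc _ = ENNReal.ofReal (1 + (n : ℝ) ^ ((m : ℝ) + α))⁻¹ := ENNReal.inv_one_add_ofReal hN
    _ ≤ ENNReal.ofReal (4 * (3 * ((m : ℝ) + 1)) ^ ((m : ℝ) + α) *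
          (1 / (4 * (((2 * n + m : ℕ) : ℝ) + 1) ^ α) / (2 * n + 1).ascFactorial m)) := by
        refine ENNReal.ofReal_le_ofReal ?_
        field_simp
        linarith
    _ = ENNReal.ofReal (4 * (3 * ((m : ℝ) + 1)) ^ ((m : ℝ) + α)) * (ENNReal.ofReal
          (1 / (4 * (((2 * n + m : ℕ) : ℝ) + 1) ^ α)) / (2 * n + 1).ascFactorial m) := by
        rw [ENNReal.ofReal_mul (by positivity),
          ENNReal.ofReal_div_natCast (Nat.ascFactorial_pos _ _)]
    _ ≤ _ := by
        gcongr
        exact le_setLIntegral_one_sub_rpow_mul_pow hα₁ _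

end Weights

theorem ENNReal.tsum_mul_lt_top_of_le_mul {ι : Type*} {u v a : ι → ℝ≥0∞} {C : ℝ≥0∞} (hC : C ≠ ∞)
    (huv : ∀ i, u i ≤ C * v i) (hv : ∑' i, v i * a i < ∞) : ∑' i, u i * a i < ∞ :=
  calc ∑' i, u i * a i ≤ ∑' i, C * (v i * a i) :=
        ENNReal.tsum_le_tsum fun i => (mul_le_mul_left (huv i) _).trans_eq (mul_assoc _ _ _)
    _ = C * ∑' i, v i * a i := ENNReal.tsum_mul_left
    _ < ∞ := ENNReal.mul_lt_top hC.lt_top hv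

theorem ENNReal.tsum_mul_lt_top_iff_of_le_mul {ι : Type*} {u v a : ι → ℝ≥0∞} {C D : ℝ≥0∞}
    (hC : C ≠ ∞) (hD : D ≠ ∞) (huv : ∀ i, u i ≤ C * v i) (hvu : ∀ i, v i ≤ D * u i) :
    ∑' i, u i * a i < ∞ ↔ ∑' i, v i * a i < ∞ :=
  ⟨tsum_mul_lt_top_of_le_mul hD hvu, tsum_mul_lt_top_of_le_mul hC huv⟩

/-- Sequence form of Theorem 2.11: for `α ∈ (0,1)`, `m ∈ ℕ`, `a : ℕ → [0,∞]` and
`f(λ) = ∑ n! λ^(2n) a n`, the Riemann--Liouville integral of order `α` of `J^m f` at `1`,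
`(1/Γ(α)) ∫₀¹ (1−λ)^(α−1) (J^m f)(λ) dλ`, is finite iff `∑ (n!/(1+n^(m+α))) a n < ∞`. -/
theorem dual_Dmalpha_characterization (α : ℝ) (hα : α ∈ Set.Ioo (0 : ℝ) 1)
    (m : ℕ) (a : ℕ → ℝ≥0∞) :
    (ENNReal.ofReal (1 / Real.Gamma α) *
        ∫⁻ x in Set.Ioo (0 : ℝ) 1, ENNReal.ofReal ((1 - x) ^ (α - 1)) *
          iterIntegral m
            (fun y : ℝ => ∑' n : ℕ, (n.factorial : ℝ≥0∞) * ENNReal.ofReal y ^ (2 * n) * a n) x) <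
        ⊤ ↔
      (∑' n : ℕ, (n.factorial : ℝ≥0∞) / (1 + ENNReal.ofReal ((n : ℝ) ^ ((m : ℝ) + α))) * a n) <
        ⊤ := by
  obtain ⟨hα₀, hα₁⟩ := hα
  have hΓ : ENNReal.ofReal (1 / Gamma α) ≠ 0 := by simpa using Gamma_pos_of_pos hα₀
  have hscale : ∀ X : ℝ≥0∞, ENNReal.ofReal (1 / Gamma α) * X < ∞ ↔ X < ∞ := fun X => by
    simp only [lt_top_iff_ne_top, ne_eq, ENNReal.mul_eq_top, hΓ, ENNReal.ofReal_ne_top,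
      not_false_eq_true, true_and, false_and, or_false]
  have hf : (fun y : ℝ => ∑' n : ℕ, (n.factorial : ℝ≥0∞) * ENNReal.ofReal y ^ (2 * n) * a n) =
      fun y => ∑' n : ℕ, (n.factorial * a n) * ENNReal.ofReal y ^ (2 * n) := by
    funext y
    exact tsum_congr fun n => mul_right_comm _ _ _
  have hweight : ∀ n : ℕ,
      (n.factorial : ℝ≥0∞) / (1 + ENNReal.ofReal ((n : ℝ) ^ ((m : ℝ) + α))) * a n =
        (1 + ENNReal.ofReal ((n : ℝ) ^ ((m : ℝ) + α)))⁻¹ * (n.factorial * a n) := fun n => by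
    rw [div_eq_mul_inv]
    ring
  rw [hf, setLIntegral_mul_iterIntegral_tsum (by fun_prop) _ (2 * ·) m, hscale, tsum_congr hweight]
  exact ENNReal.tsum_mul_lt_top_iff_of_le_mul ENNReal.ofReal_ne_top ENNReal.ofReal_ne_top
    (setLIntegral_div_ascFactorial_le m · hα₀)
    (inv_one_add_rpow_le_setLIntegral_div_ascFactorial m · hα₀.le hα₁.le)
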